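/- arXiv:1109.1077 — 2 statements merged into one kernel-verified Lean document; each statement's English description precedes it below -/
import Mathlib

section
/- Let (Ω, μ) be a probability space, ι a nonempty finite index type with n = |ι|, and X : ι → Ω → ℝ random variables with |X(i)| ≤ M almost surely for all i, for some M ≥ 0. Let dist : ι → ι → ℕ be a function and α : ℕ → ℝ a nonnegative function such that: (a) |Cov(X(i), X(j))| ≤ α(dist(i,j)) whenever dist(i,j) ≥ 1; (b) for each i, the number of indices j with dist(i,j) = 0 is at most K; (c) for each i and each k ≥ 1, the number of indices j with dist(i,j) = k is at most C·k^{ρ-1}, where ρ ≥ 1 is a real constant; and (d) the series A = ∑_{k=1}^∞ α(k)·k^{ρ-1} converges. Then Var((1/n)·∑_{i ∈ ι} X(i)) ≤ (4·K·M² + C·A)/n. -/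
/-!
Expanding the variance of the average gives `n⁻² ∑ᵢ ∑ⱼ Cov(Xᵢ, Xⱼ)`. Fix a row `i` and sort the
indices `j` by their distance to `i`: the at most `K` indices at distance `0` contribute at most
`4M²` each, since the centred variables are bounded by `2M`; the at most `C k^{ρ-1}` indices at
distance `k ≥ 1` contribute at most `α k` each, so together at most `C ∑_{k ≥ 1} α k k^{ρ-1} = C A`.
Summing the `n` rows gives `n (4KM² + CA)`, and the factor `n⁻²` leaves `(4KM² + CA) / n`.
-/

open MeasureTheory ProbabilityTheory

/-- The covariance `Cov(X, Y) = E[(X - E[X])·(Y - E[Y])]` of two real-valued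
random variables on a measure space. -/
noncomputable def cov {Ω : Type*} [MeasurableSpace Ω] (μ : Measure Ω)
    (X Y : Ω → ℝ) : ℝ :=
  ∫ ω, (X ω - ∫ x, X x ∂μ) * (Y ω - ∫ x, Y x ∂μ) ∂μ

section Bounded

variable {Ω : Type*} [MeasurableSpace Ω] {μ : Measure Ω} [IsProbabilityMeasure μ]

lemma abs_integral_le_of_ae_abs_le {f : Ω → ℝ} {a : ℝ} (hf : ∀ᵐ ω ∂μ, |f ω| ≤ a) :
    |∫ ω, f ω ∂μ| ≤ a := by
  simpa using norm_integral_le_of_norm_le_const (μ := μ) (f := f) (C := a) hf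

lemma ae_abs_sub_integral_le_of_ae_abs_le {f : Ω → ℝ} {a : ℝ} (hf : ∀ᵐ ω ∂μ, |f ω| ≤ a) :
    ∀ᵐ ω ∂μ, |f ω - ∫ x, f x ∂μ| ≤ 2 * a := by
  filter_upwards [hf] with ω hω
  linarith [abs_sub (f ω) (∫ x, f x ∂μ), abs_integral_le_of_ae_abs_le hf]

lemma abs_cov_le_of_ae_abs_le {X Y : Ω → ℝ} {a b : ℝ}
    (hX : ∀ᵐ ω ∂μ, |X ω| ≤ a) (hY : ∀ᵐ ω ∂μ, |Y ω| ≤ b) :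
    |cov μ X Y| ≤ 4 * a * b := by
  refine abs_integral_le_of_ae_abs_le ?_
  filter_upwards [ae_abs_sub_integral_le_of_ae_abs_le hX,
    ae_abs_sub_integral_le_of_ae_abs_le hY] with ω hx hy
  calc |(X ω - ∫ x, X x ∂μ) * (Y ω - ∫ x, Y x ∂μ)|
      ≤ 2 * a * (2 * b) := by
        rw [abs_mul]
        exact mul_le_mul hx hy (abs_nonneg _) ((abs_nonneg _).trans hx)
    _ = 4 * a * b := by ring

end Bounded

lemma sum_le_of_hasSum_succ {f : ℕ → ℝ} {A : ℝ} (hf : ∀ k, 0 ≤ f (k + 1))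
    (hA : HasSum (fun k => f (k + 1)) A) {s : Finset ℕ} (hs : ∀ k ∈ s, 1 ≤ k) :
    ∑ k ∈ s, f k ≤ A := by
  rw [← Finset.sum_preimage (· + 1) s Nat.succ_injective.injOn f fun k hk hk' =>
    absurd ⟨k - 1, Nat.sub_add_cancel (hs k hk)⟩ hk']
  exact sum_le_hasSum _ (fun k _ => hf k) hA

section Counting

variable {ι : Type*} {α g : ℕ → ℝ} {C A : ℝ}

lemma sum_comp_le_of_card_fiber_le (s : Finset ι) (d : ι → ℕ)
    (hα : ∀ k, 0 ≤ α k) (hg : ∀ k, 0 ≤ g k) (hC : 0 ≤ C) (hs : ∀ j ∈ s, 1 ≤ d j)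
    (hcard : ∀ k, 1 ≤ k → ((s.filter (fun j => d j = k)).card : ℝ) ≤ C * g k)
    (hA : HasSum (fun k => α (k + 1) * g (k + 1)) A) :
    ∑ j ∈ s, α (d j) ≤ C * A := by
  have hpos : ∀ k ∈ s.image d, 1 ≤ k := by
    simp only [Finset.mem_image]
    rintro k ⟨j, hj, rfl⟩
    exact hs j hj
  calc ∑ j ∈ s, α (d j) = ∑ k ∈ s.image d, (s.filter (fun j => d j = k)).card • α k :=
        Finset.sum_comp α d
    _ ≤ ∑ k ∈ s.image d, C * (α k * g k) := by
        refine Finset.sum_le_sum fun k hk => ?_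
        calc (s.filter (fun j => d j = k)).card • α k ≤ C * g k * α k := by
              rw [nsmul_eq_mul]
              exact mul_le_mul_of_nonneg_right (hcard k (hpos k hk)) (hα k)
          _ = C * (α k * g k) := by ring
    _ ≤ C * A := by
        rw [← Finset.mul_sum]
        exact mul_le_mul_of_nonneg_left (sum_le_of_hasSum_succ (f := fun k => α k * g k)
          (fun k => mul_nonneg (hα _) (hg _)) hA hpos) hC

lemma sum_le_of_card_dist_le [Fintype ι] (w : ι → ℝ) (d : ι → ℕ)
    (hα : ∀ k, 0 ≤ α k) (hg : ∀ k, 0 ≤ g k) {B : ℝ} (hB : 0 ≤ B) {K : ℕ} (hC : 0 ≤ C)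
    (hw₀ : ∀ j, d j = 0 → w j ≤ B) (hw : ∀ j, 1 ≤ d j → w j ≤ α (d j))
    (hK : (Finset.univ.filter (fun j => d j = 0)).card ≤ K)
    (hcard : ∀ k, 1 ≤ k → ((Finset.univ.filter (fun j => d j = k)).card : ℝ) ≤ C * g k)
    (hA : HasSum (fun k => α (k + 1) * g (k + 1)) A) :
    ∑ j, w j ≤ K * B + C * A := by
  rw [← Finset.sum_filter_add_sum_filter_not Finset.univ (fun j => d j = 0)]
  gcongr
  · calc ∑ j ∈ Finset.univ.filter (fun j => d j = 0), w j
          ≤ (Finset.univ.filter (fun j => d j = 0)).card • B :=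
          Finset.sum_le_card_nsmul _ _ _ fun j hj => hw₀ j (Finset.mem_filter.mp hj).2
      _ ≤ K * B := by
          rw [nsmul_eq_mul]
          exact mul_le_mul_of_nonneg_right (by exact_mod_cast hK) hB
  · have hpos : ∀ j ∈ Finset.univ.filter (fun j => ¬d j = 0), 1 ≤ d j := fun j hj =>
      Nat.one_le_iff_ne_zero.mpr (Finset.mem_filter.mp hj).2
    calc _ ≤ ∑ j ∈ Finset.univ.filter (fun j => ¬d j = 0), α (d j) :=
          Finset.sum_le_sum fun j hj => hw j (hpos j hj)
      _ ≤ C * A := sum_comp_le_of_card_fiber_le _ d hα hg hC hpos (fun k hk =>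
          le_trans (by gcongr; exact Finset.filter_subset _ _) (hcard k hk)) hA

end Counting

theorem stmt_5_general {Ω : Type*} [MeasurableSpace Ω] (μ : Measure Ω)
    [IsProbabilityMeasure μ] {ι : Type*} [Fintype ι]
    (n : ℕ) (hn : n = Fintype.card ι)
    (X : ι → Ω → ℝ) (hXm : ∀ i, AEStronglyMeasurable (X i) μ)
    (M : ℝ) (hXb : ∀ i, ∀ᵐ ω ∂μ, |X i ω| ≤ M)
    (dist : ι → ι → ℕ) (α : ℕ → ℝ) (hα : ∀ k, 0 ≤ α k)
    (K : ℕ) (C ρ : ℝ) (hC : 0 ≤ C) (A : ℝ)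
    (ha : ∀ i j, 1 ≤ dist i j → |cov μ (X i) (X j)| ≤ α (dist i j))
    (hb : ∀ i, (Finset.univ.filter (fun j => dist i j = 0)).card ≤ K)
    (hc : ∀ i, ∀ k : ℕ, 1 ≤ k →
      ((Finset.univ.filter (fun j => dist i j = k)).card : ℝ) ≤ C * (k : ℝ) ^ (ρ - 1))
    (hd : HasSum (fun k : ℕ => α (k + 1) * ((k + 1 : ℕ) : ℝ) ^ (ρ - 1)) A) :
    variance (fun ω => (1 / n : ℝ) * ∑ i, X i ω) μ ≤ (4 * K * M ^ 2 + C * A) / n := by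
  have hL2 : ∀ i, MemLp (X i) 2 μ := fun i =>
    MemLp.of_bound (hXm i) M (by simpa only [Real.norm_eq_abs] using hXb i)
  have hrow : ∀ i, ∑ j, |cov μ (X i) (X j)| ≤ K * (4 * M ^ 2) + C * A := fun i =>
    sum_le_of_card_dist_le _ (dist i) hα (fun k => by positivity) (by positivity) hC
      (fun j _ => by simpa only [mul_assoc, ← sq] using abs_cov_le_of_ae_abs_le (hXb i) (hXb j))
      (ha i) (hb i) (hc i) hd
  calc variance (fun ω => (1 / n : ℝ) * ∑ i, X i ω) μ
      = (1 / n : ℝ) ^ 2 * ∑ i, ∑ j, cov μ (X i) (X j) := by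
        rw [variance_const_mul, variance_fun_sum hL2]
        rfl
    _ ≤ (1 / n : ℝ) ^ 2 * ∑ _i : ι, (K * (4 * M ^ 2) + C * A) := by
        gcongr with i
        exact (Finset.sum_le_sum fun j _ => le_abs_self _).trans (hrow i)
    _ = (4 * K * M ^ 2 + C * A) / n := by
        rw [Finset.sum_const, Finset.card_univ, ← hn, nsmul_eq_mul]
        -- for `n = 0` both sides vanish, since `1 / 0 = 0`
        rcases eq_or_ne (n : ℝ) 0 with h | h
        · simp [h]
        · field_simp

/-- Abstract variance-convergence lemma: for bounded random variables indexed
by a finite nonempty type, with covariances controlled by a mixing coefficient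
`α` of a distance `dist` on the indices, at most `K` indices at distance `0`
from any index, at most `C·k^{ρ-1}` indices at distance `k ≥ 1`, and
`A = ∑_{k≥1} α(k)·k^{ρ-1}` finite, the variance of the average is at most
`(4·K·M² + C·A)/n`. -/
theorem stmt_5 {Ω : Type*} [MeasurableSpace Ω] (μ : Measure Ω)
    [IsProbabilityMeasure μ] {ι : Type*} [Fintype ι] [Nonempty ι]
    (n : ℕ) (hn : n = Fintype.card ι)
    (X : ι → Ω → ℝ) (hXm : ∀ i, AEStronglyMeasurable (X i) μ)
    (M : ℝ) (hM : 0 ≤ M) (hXb : ∀ i, ∀ᵐ ω ∂μ, |X i ω| ≤ M)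
    (dist : ι → ι → ℕ) (α : ℕ → ℝ) (hα : ∀ k, 0 ≤ α k)
    (K : ℕ) (C ρ : ℝ) (hC : 0 ≤ C) (hρ : 1 ≤ ρ) (A : ℝ)
    (ha : ∀ i j, 1 ≤ dist i j → |cov μ (X i) (X j)| ≤ α (dist i j))
    (hb : ∀ i, (Finset.univ.filter (fun j => dist i j = 0)).card ≤ K)
    (hc : ∀ i, ∀ k : ℕ, 1 ≤ k →
      ((Finset.univ.filter (fun j => dist i j = k)).card : ℝ) ≤ C * (k : ℝ) ^ (ρ - 1))
    (hd : HasSum (fun k : ℕ => α (k + 1) * ((k + 1 : ℕ) : ℝ) ^ (ρ - 1)) A) :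
    variance (fun ω => (1 / n : ℝ) * ∑ i, X i ω) μ ≤ (4 * K * M ^ 2 + C * A) / n :=
  stmt_5_general μ n hn X hXm M hXb dist α hα K C ρ hC A ha hb hc hd
end

section
/- Let (Ωₙ, μₙ) be a sequence of probability spaces, and for each n let ιₙ be a finite index type of cardinality n ≥ 1 and Xₙ : ιₙ → Ωₙ → ℝ random variables with |Xₙ(i)| ≤ M almost surely for all i, with M independent of n. Suppose for each n there is a function distₙ : ιₙ → ιₙ → ℕ such that: (a) |Cov(Xₙ(i), Xₙ(j))| ≤ α(distₙ(i,j)) whenever distₙ(i,j) ≥ 1, for a fixed nonnegative α : ℕ → ℝ; (b) for each i the number of j with distₙ(i,j) = 0 is at most K; (c) for each i and k ≥ 1 the number of j with distₙ(i,j) = k is at most C·k^{ρ-1} for a fixed real ρ ≥ 1; and (d) ∑_{k=1}^∞ α(k)·k^{ρ-1} converges. Then Var((1/n)·∑_{i ∈ ιₙ} Xₙ(i)) tends to 0 as n → ∞. -/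
open MeasureTheory ProbabilityTheory Filter Topology

/-!
Expanding the variance of the average gives `n⁻² ∑ᵢ ∑ⱼ Cov(Xᵢ, Xⱼ)`. For a fixed `i`, the at most
`K` indices at distance `0` contribute at most `(2M)²` each, while grouping the other indices into
shells of distance `k ≥ 1` bounds their contribution by `C ∑ₖ α(k) k^(ρ-1)`. Each row sum is thus
bounded uniformly in `n`, so the variance is `O(1/n)`.
-/

lemma abs_covariance_le_of_abs_le {Ω : Type*} [MeasurableSpace Ω] {μ : Measure Ω}
    [IsProbabilityMeasure μ] {X Y : Ω → ℝ} {M : ℝ}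
    (hX : ∀ᵐ ω ∂μ, |X ω| ≤ M) (hY : ∀ᵐ ω ∂μ, |Y ω| ≤ M) :
    |covariance X Y μ| ≤ (2 * M) ^ 2 := by
  have centered_le {Z : Ω → ℝ} (hZ : ∀ᵐ ω ∂μ, |Z ω| ≤ M) : ∀ᵐ ω ∂μ, |Z ω - μ[Z]| ≤ 2 * M := by
    have hmean : |μ[Z]| ≤ M := by
      simpa using norm_integral_le_of_norm_le_const (μ := μ) (f := Z) (by simpa using hZ)
    filter_upwards [hZ] with ω hω
    linarith [abs_sub (Z ω) μ[Z]]
  have hprod : ∀ᵐ ω ∂μ, ‖(X ω - μ[X]) * (Y ω - μ[Y])‖ ≤ (2 * M) ^ 2 := by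
    filter_upwards [centered_le hX, centered_le hY] with ω h₁ h₂
    rw [Real.norm_eq_abs, abs_mul, sq]
    exact mul_le_mul h₁ h₂ (abs_nonneg _) ((abs_nonneg _).trans h₁)
  simpa [covariance] using norm_integral_le_of_norm_le_const hprod

lemma variance_average_le {Ω ι : Type*} [MeasurableSpace Ω] {μ : Measure Ω} [IsFiniteMeasure μ]
    [Fintype ι] {X : ι → Ω → ℝ} (hX : ∀ i, MemLp (X i) 2 μ) {R : ℝ}
    (hR : ∀ i, ∑ j, |cov[X i, X j; μ]| ≤ R) :
    Var[fun ω ↦ (1 / (Fintype.card ι : ℝ)) * ∑ i, X i ω; μ] ≤ R / Fintype.card ι := by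
  rw [variance_const_mul, variance_fun_sum hX]
  calc (1 / (Fintype.card ι : ℝ)) ^ 2 * ∑ i, ∑ j, cov[X i, X j; μ]
      ≤ (1 / (Fintype.card ι : ℝ)) ^ 2 * ∑ _i : ι, R := by
        gcongr with i
        exact (Finset.sum_le_sum fun j _ ↦ le_abs_self _).trans (hR i)
    _ = R / Fintype.card ι := by
        rw [Finset.sum_const, Finset.card_univ, nsmul_eq_mul]
        rcases eq_or_ne (Fintype.card ι : ℝ) 0 with h | h
        · simp [h]
        · field_simp

section Shells

open Finset

variable {ι : Type*} [Fintype ι] (d : ι → ℕ) (f : ι → ℝ)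

lemma sum_filter_eq_zero_le {B : ℝ} (hB : 0 ≤ B) {K : ℕ} (hf : ∀ j, d j = 0 → f j ≤ B)
    (hK : #{j | d j = 0} ≤ K) :
    ∑ j with d j = 0, f j ≤ K * B :=
  calc ∑ j with d j = 0, f j ≤ ∑ j with d j = 0, B :=
        sum_le_sum fun j hj ↦ hf j (mem_filter.mp hj).2
    _ = #{j | d j = 0} * B := by rw [sum_const, nsmul_eq_mul]
    _ ≤ K * B := by gcongr

lemma sum_filter_ne_zero_le_mul_tsum {α : ℕ → ℝ} (hα : ∀ k, 0 ≤ α k) {C ρ : ℝ} (hC : 0 ≤ C)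
    (hf : ∀ j, 1 ≤ d j → f j ≤ α (d j))
    (hcard : ∀ k, 1 ≤ k → (#{j | d j = k} : ℝ) ≤ C * (k : ℝ) ^ (ρ - 1))
    (hsum : Summable fun k : ℕ ↦ α (k + 1) * ((k + 1 : ℕ) : ℝ) ^ (ρ - 1)) :
    ∑ j with d j ≠ 0, f j ≤ C * ∑' k : ℕ, α (k + 1) * ((k + 1 : ℕ) : ℝ) ^ (ρ - 1) := by
  set s : Finset ι := {j | d j ≠ 0}
  calc ∑ j ∈ s, f j ≤ ∑ j ∈ s, α (d j - 1 + 1) := sum_le_sum fun j hj ↦ by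
        have hdj : d j ≠ 0 := (mem_filter.mp hj).2
        rw [Nat.sub_add_cancel (Nat.one_le_iff_ne_zero.mpr hdj)]
        exact hf j (Nat.one_le_iff_ne_zero.mpr hdj)
    _ = ∑ m ∈ s.image (d · - 1), #{j ∈ s | d j - 1 = m} • α (m + 1) :=
        sum_comp (fun m ↦ α (m + 1)) (d · - 1)
    _ ≤ ∑ m ∈ s.image (d · - 1), C * (α (m + 1) * ((m + 1 : ℕ) : ℝ) ^ (ρ - 1)) := by
        gcongr with m
        have hsub : {j ∈ s | d j - 1 = m} ⊆ ({j | d j = m + 1} : Finset ι) := fun j hj ↦ by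
          simp only [s, mem_filter, mem_univ, true_and] at hj ⊢
          omega
        rw [nsmul_eq_mul, ← mul_assoc, mul_right_comm]
        exact mul_le_mul_of_nonneg_right
          ((Nat.cast_le.mpr (card_le_card hsub)).trans (hcard (m + 1) m.succ_pos)) (hα _)
    _ ≤ C * ∑' k : ℕ, α (k + 1) * ((k + 1 : ℕ) : ℝ) ^ (ρ - 1) := by
        rw [← mul_sum]
        gcongr
        exact hsum.sum_le_tsum _ fun k _ ↦ mul_nonneg (hα _) (by positivity)

end Shells

theorem stmt_6_general (Ω : ℕ → Type*) [∀ n, MeasurableSpace (Ω n)]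
    (μ : ∀ n, Measure (Ω n)) [∀ n, IsProbabilityMeasure (μ n)]
    (ι : ℕ → Type*) [∀ n, Fintype (ι n)]
    (hcard : ∀ n, 1 ≤ n → Fintype.card (ι n) = n)
    (X : ∀ n, ι n → Ω n → ℝ)
    (hXm : ∀ n i, AEStronglyMeasurable (X n i) (μ n))
    (M : ℝ) (hXb : ∀ n i, ∀ᵐ ω ∂(μ n), |X n i ω| ≤ M)
    (dist : ∀ n, ι n → ι n → ℕ) (α : ℕ → ℝ) (hα : ∀ k, 0 ≤ α k)
    (K : ℕ) (C ρ : ℝ) (hC : 0 ≤ C)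
    (ha : ∀ n i j, 1 ≤ dist n i j →
      |cov (μ n) (X n i) (X n j)| ≤ α (dist n i j))
    (hb : ∀ n i, (Finset.univ.filter (fun j => dist n i j = 0)).card ≤ K)
    (hc : ∀ n i, ∀ k : ℕ, 1 ≤ k →
      ((Finset.univ.filter (fun j => dist n i j = k)).card : ℝ) ≤
        C * (k : ℝ) ^ (ρ - 1))
    (hd : Summable (fun k : ℕ => α (k + 1) * ((k + 1 : ℕ) : ℝ) ^ (ρ - 1))) :
    Tendsto (fun n : ℕ => variance (fun ω => (1 / (n : ℝ)) * ∑ i, X n i ω) (μ n))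
      atTop (𝓝 0) := by
  set R := K * (2 * M) ^ 2 + C * ∑' k : ℕ, α (k + 1) * ((k + 1 : ℕ) : ℝ) ^ (ρ - 1)
  -- `cov μ X Y` unfolds to Mathlib's `cov[X, Y; μ]`, so `ha` applies to the latter as it stands.
  have hrow (n : ℕ) (i : ι n) : ∑ j, |cov[X n i, X n j; μ n]| ≤ R := by
    rw [← Finset.sum_filter_add_sum_filter_not _ (dist n i · = 0)]
    exact add_le_add
      (sum_filter_eq_zero_le _ _ (by positivity)
        (fun j _ ↦ abs_covariance_le_of_abs_le (hXb n i) (hXb n j)) (hb n i))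
      (sum_filter_ne_zero_le_mul_tsum _ _ hα hC (ha n i) (hc n i) hd)
  have hvar (n : ℕ) (hn : 1 ≤ n) :
      Var[fun ω ↦ (1 / (n : ℝ)) * ∑ i, X n i ω; μ n] ≤ R / n := by
    have hmem (i : ι n) : MemLp (X n i) 2 (μ n) :=
      MemLp.of_bound (hXm n i) M (by simpa using hXb n i)
    simpa [hcard n hn] using variance_average_le hmem (hrow n)
  exact squeeze_zero' (.of_forall fun n ↦ variance_nonneg _ _)
    (eventually_atTop.mpr ⟨1, hvar⟩) (tendsto_const_div_atTop_nhds_zero_nat R)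

/-- Variance-convergence lemma (Lemma 1 of the paper): for a sequence of
families of uniformly bounded random variables indexed by finite types of
cardinality `n`, with covariances controlled by a fixed mixing coefficient `α`
of a distance on the indices, at most `K` indices at distance `0` from any
index, at most `C·k^{ρ-1}` indices at distance `k ≥ 1`, and
`∑_{k≥1} α(k)·k^{ρ-1} < ∞`, the variance of the average tends to `0` as
`n → ∞`. -/
theorem stmt_6 (Ω : ℕ → Type*) [∀ n, MeasurableSpace (Ω n)]
    (μ : ∀ n, Measure (Ω n)) [∀ n, IsProbabilityMeasure (μ n)]
    (ι : ℕ → Type*) [∀ n, Fintype (ι n)]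
    (hcard : ∀ n, 1 ≤ n → Fintype.card (ι n) = n)
    (X : ∀ n, ι n → Ω n → ℝ)
    (hXm : ∀ n i, AEStronglyMeasurable (X n i) (μ n))
    (M : ℝ) (hM : 0 ≤ M) (hXb : ∀ n i, ∀ᵐ ω ∂(μ n), |X n i ω| ≤ M)
    (dist : ∀ n, ι n → ι n → ℕ) (α : ℕ → ℝ) (hα : ∀ k, 0 ≤ α k)
    (K : ℕ) (C ρ : ℝ) (hC : 0 ≤ C) (hρ : 1 ≤ ρ)
    (ha : ∀ n i j, 1 ≤ dist n i j →
      |cov (μ n) (X n i) (X n j)| ≤ α (dist n i j))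
    (hb : ∀ n i, (Finset.univ.filter (fun j => dist n i j = 0)).card ≤ K)
    (hc : ∀ n i, ∀ k : ℕ, 1 ≤ k →
      ((Finset.univ.filter (fun j => dist n i j = k)).card : ℝ) ≤
        C * (k : ℝ) ^ (ρ - 1))
    (hd : Summable (fun k : ℕ => α (k + 1) * ((k + 1 : ℕ) : ℝ) ^ (ρ - 1))) :
    Tendsto (fun n : ℕ => variance (fun ω => (1 / (n : ℝ)) * ∑ i, X n i ω) (μ n))
      atTop (𝓝 0) :=
  stmt_6_general Ω μ ι hcard X hXm M hXb dist α hα K C ρ hC ha hb hc hd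
end
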